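/- Let W : D → ℂ be a C² function on an open set D ⊂ ℂ with W(z) ≠ 0, satisfying ∂W/∂z̄ = (1/2)|W|². Define ξ : D → ℂ by ξ = (∂W/∂z)/W - W/2. Then ∂ξ/∂z̄ = 0 on D, i.e., ξ restricts to a holomorphic function on any solution of the PDE. -/

import Mathlib

/-!
Differentiate the equation `W_z̄ = W W̄ / 2` in `z`. Since `∂_z` and `∂_z̄` commute on `C²`
functions and `∂_z W̄ = conj (W_z̄) = |W|² / 2`, this gives
`W_{z z̄} = (W_z W̄ + W |W|² / 2) / 2`. Substituting into
`ξ_z̄ = W_{z z̄} / W - W_z W_z̄ / W² - W_z̄ / 2` and using the equation once more, everything cancels.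
-/

/-- The Wirtinger derivative `∂W/∂z = (1/2)(∂_x - i ∂_y) W`. -/
noncomputable def wirtingerZ (W : ℂ → ℂ) (z : ℂ) : ℂ :=
  (1 / 2 : ℂ) * (fderiv ℝ W z 1 - Complex.I * fderiv ℝ W z Complex.I)

/-- The Wirtinger derivative `∂W/∂z̄ = (1/2)(∂_x + i ∂_y) W`. -/
noncomputable def wirtingerZbar (W : ℂ → ℂ) (z : ℂ) : ℂ :=
  (1 / 2 : ℂ) * (fderiv ℝ W z 1 + Complex.I * fderiv ℝ W z Complex.I)

open Complex ComplexConjugate Filter Topology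

section WirtingerCalculus

variable {f g : ℂ → ℂ} {z : ℂ}

theorem HasFDerivAt.wirtingerZ_eq {f' : ℂ →L[ℝ] ℂ} (hf : HasFDerivAt f f' z) :
    wirtingerZ f z = (1 / 2 : ℂ) * (f' 1 - I * f' I) := by
  rw [wirtingerZ, hf.fderiv]

theorem HasFDerivAt.wirtingerZbar_eq {f' : ℂ →L[ℝ] ℂ} (hf : HasFDerivAt f f' z) :
    wirtingerZbar f z = (1 / 2 : ℂ) * (f' 1 + I * f' I) := by
  rw [wirtingerZbar, hf.fderiv]

theorem Filter.EventuallyEq.wirtingerZ_eq (h : f =ᶠ[𝓝 z] g) :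
    wirtingerZ f z = wirtingerZ g z := by
  rw [wirtingerZ, wirtingerZ, h.fderiv_eq]

theorem wirtingerZ_conj : wirtingerZ (fun y => conj (f y)) z = conj (wirtingerZbar f z) := by
  simp only [wirtingerZ, wirtingerZbar]
  rw [show (fun y => conj (f y)) = fun y => star (f y) from rfl, fderiv_star]
  simp only [ContinuousLinearMap.comp_apply, ContinuousLinearEquiv.coe_coe, starL'_apply,
    RCLike.star_def, map_mul, map_add, map_div₀, map_one, map_ofNat, conj_I]
  ring

theorem wirtingerZ_mul (hf : DifferentiableAt ℝ f z) (hg : DifferentiableAt ℝ g z) :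
    wirtingerZ (fun y => f y * g y) z = wirtingerZ f z * g z + f z * wirtingerZ g z := by
  rw [(hf.hasFDerivAt.fun_mul hg.hasFDerivAt).wirtingerZ_eq, hf.hasFDerivAt.wirtingerZ_eq,
    hg.hasFDerivAt.wirtingerZ_eq]
  simp only [smul_apply, add_apply, smul_eq_mul]
  ring

theorem wirtingerZ_const_mul (c : ℂ) (hf : DifferentiableAt ℝ f z) :
    wirtingerZ (fun y => c * f y) z = c * wirtingerZ f z := by
  rw [(hf.hasFDerivAt.const_mul c).wirtingerZ_eq, hf.hasFDerivAt.wirtingerZ_eq]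
  simp only [smul_apply, smul_eq_mul]
  ring

theorem wirtingerZbar_sub (hf : DifferentiableAt ℝ f z) (hg : DifferentiableAt ℝ g z) :
    wirtingerZbar (fun y => f y - g y) z = wirtingerZbar f z - wirtingerZbar g z := by
  rw [(hf.hasFDerivAt.fun_sub hg.hasFDerivAt).wirtingerZbar_eq, hf.hasFDerivAt.wirtingerZbar_eq,
    hg.hasFDerivAt.wirtingerZbar_eq]
  simp only [sub_apply]
  ring

theorem wirtingerZbar_div_const (c : ℂ) (hf : DifferentiableAt ℝ f z) :
    wirtingerZbar (fun y => f y / c) z = wirtingerZbar f z / c := by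
  simp only [div_eq_mul_inv]
  rw [(hf.hasFDerivAt.mul_const c⁻¹).wirtingerZbar_eq, hf.hasFDerivAt.wirtingerZbar_eq]
  simp only [smul_apply, smul_eq_mul]
  ring

theorem wirtingerZbar_div (hf : DifferentiableAt ℝ f z) (hg : DifferentiableAt ℝ g z)
    (hz : g z ≠ 0) :
    wirtingerZbar (fun y => f y / g y) z =
      (wirtingerZbar f z * g z - f z * wirtingerZbar g z) / g z ^ 2 := by
  have hinv : HasFDerivAt (fun y => (g y)⁻¹) ((-(g z ^ 2)⁻¹) • fderiv ℝ g z) z :=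
    (hasDerivAt_inv hz).comp_hasFDerivAt z hg.hasFDerivAt
  simp only [div_eq_mul_inv]
  rw [(hf.hasFDerivAt.fun_mul hinv).wirtingerZbar_eq, hf.hasFDerivAt.wirtingerZbar_eq,
    hg.hasFDerivAt.wirtingerZbar_eq]
  simp only [smul_apply, add_apply, smul_eq_mul]
  field_simp
  ring

end WirtingerCalculus

section SecondDerivatives

variable {f : ℂ → ℂ} {z : ℂ} {S : ℂ →L[ℝ] ℂ →L[ℝ] ℂ}

theorem HasFDerivAt.fderiv_apply (hS : HasFDerivAt (fderiv ℝ f) S z) (v : ℂ) :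
    HasFDerivAt (fun y => fderiv ℝ f y v) (S.flip v) z :=
  (ContinuousLinearMap.apply ℝ ℂ v).hasFDerivAt.comp z hS

theorem HasFDerivAt.hasFDerivAt_wirtingerZ (hS : HasFDerivAt (fderiv ℝ f) S z) :
    HasFDerivAt (wirtingerZ f) ((1 / 2 : ℂ) • (S.flip 1 - I • S.flip I)) z :=
  ((hS.fderiv_apply 1).sub ((hS.fderiv_apply I).const_smul I)).const_smul (1 / 2 : ℂ)

theorem HasFDerivAt.hasFDerivAt_wirtingerZbar (hS : HasFDerivAt (fderiv ℝ f) S z) :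
    HasFDerivAt (wirtingerZbar f) ((1 / 2 : ℂ) • (S.flip 1 + I • S.flip I)) z :=
  ((hS.fderiv_apply 1).add ((hS.fderiv_apply I).const_smul I)).const_smul (1 / 2 : ℂ)

theorem ContDiffAt.hasFDerivAt_fderiv (hf : ContDiffAt ℝ 2 f z) :
    HasFDerivAt (fderiv ℝ f) (fderiv ℝ (fderiv ℝ f) z) z :=
  ((hf.fderiv_right (m := 1) le_rfl).differentiableAt one_ne_zero).hasFDerivAt

theorem wirtingerZbar_wirtingerZ (hf : ContDiffAt ℝ 2 f z) :
    wirtingerZbar (wirtingerZ f) z = wirtingerZ (wirtingerZbar f) z := by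
  have hS := hf.hasFDerivAt_fderiv
  have hsymm := hf.isSymmSndFDerivAt (by norm_num) 1 I
  rw [hS.hasFDerivAt_wirtingerZ.wirtingerZbar_eq, hS.hasFDerivAt_wirtingerZbar.wirtingerZ_eq]
  simp only [smul_apply, add_apply, sub_apply, ContinuousLinearMap.flip_apply, smul_eq_mul]
  linear_combination -I / 2 * hsymm

theorem ContDiffAt.differentiableAt_wirtingerZ (hf : ContDiffAt ℝ 2 f z) :
    DifferentiableAt ℝ (wirtingerZ f) z :=
  hf.hasFDerivAt_fderiv.hasFDerivAt_wirtingerZ.differentiableAt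

end SecondDerivatives

/-- If `W` is a nonvanishing `C²` solution of `∂W/∂z̄ = (1/2)|W|²` on an open
set `D`, then `ξ = W_z/W - W/2` satisfies `∂ξ/∂z̄ = 0` on `D`: it is a
holomorphic Darboux invariant. -/
theorem stmt9 (D : Set ℂ) (hD : IsOpen D) (W : ℂ → ℂ)
    (hW : ContDiffOn ℝ 2 W D)
    (hWne : ∀ z ∈ D, W z ≠ 0)
    (hpde : ∀ z ∈ D, wirtingerZbar W z = (1 / 2 : ℂ) * (Complex.normSq (W z) : ℝ)) :
    let ξ : ℂ → ℂ := fun z => wirtingerZ W z / W z - W z / 2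
    ∀ z ∈ D, wirtingerZbar ξ z = 0 := by
  intro ξ z hz
  have hW2 : ContDiffAt ℝ 2 W z := hW.contDiffAt (hD.mem_nhds hz)
  have hWd : DifferentiableAt ℝ W z := hW2.differentiableAt two_ne_zero
  have hWzd : DifferentiableAt ℝ (wirtingerZ W) z := hW2.differentiableAt_wirtingerZ
  have hpde_conj : ∀ y ∈ D, wirtingerZbar W y = 1 / 2 * (W y * conj (W y)) := by
    intro y hy
    rw [hpde y hy, mul_conj]
  have hmixed : wirtingerZbar (wirtingerZ W) z =
      1 / 2 * (wirtingerZ W z * conj (W z) + W z * conj (wirtingerZbar W z)) := by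
    have hloc : wirtingerZbar W =ᶠ[𝓝 z] fun y => 1 / 2 * (W y * conj (W y)) :=
      eventually_of_mem (hD.mem_nhds hz) hpde_conj
    rw [wirtingerZbar_wirtingerZ hW2, hloc.wirtingerZ_eq, wirtingerZ_const_mul _ (by fun_prop),
      wirtingerZ_mul hWd (by fun_prop), wirtingerZ_conj]
  have hξ : wirtingerZbar ξ z = wirtingerZbar (wirtingerZ W) z / W z
      - wirtingerZ W z * wirtingerZbar W z / W z ^ 2 - wirtingerZbar W z / 2 := by
    have hquot : DifferentiableAt ℝ (fun y => wirtingerZ W y / W y) z := by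
      simpa only [div_eq_mul_inv] using hWzd.fun_mul (hWd.fun_inv (hWne z hz))
    rw [wirtingerZbar_sub hquot (by fun_prop), wirtingerZbar_div hWzd hWd (hWne z hz),
      wirtingerZbar_div_const _ hWd]
    field_simp
  rw [hξ, hmixed, hpde_conj z hz]
  simp only [map_mul, map_div₀, map_one, map_ofNat, conj_conj]
  field_simp
  ring
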